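/- Let A, B be positive definite n×n complex matrices and ν ∈ (0,1). Then for every nonnegative integer n₀, in the Loewner order, (1−ν)A + νB ≥ A♯_ν B + Σ_{k=0}^{n₀} r_k [ A♯_{m_k/2^k} B − 2 A♯_{(2m_k+1)/2^{k+1}} B + A♯_{(m_k+1)/2^k} B ]. -/

import Mathlib

open scoped ComplexOrder

/-- `r ν k`: the recursively defined coefficients, `r 0 = min {ν, 1-ν}`,
`r k = min {2 r (k-1), 1 - 2 r (k-1)}`. -/
noncomputable def r (ν : ℝ) : ℕ → ℝ
  | 0 => min ν (1 - ν)
  | k + 1 => min (2 * r ν k) (1 - 2 * r ν k)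

/-- `m ν k = ⌊2^k ν⌋`, as a real number. -/
noncomputable def m (ν : ℝ) (k : ℕ) : ℝ := ⌊2 ^ k * ν⌋

variable {d : ℕ}

/-- Real power of a matrix via the functional calculus: for a Hermitian matrix with spectral
decomposition `A = U diag(λᵢ) U*`, `mpow A t = U diag(λᵢ^t) U*` (real powers `Real.rpow` of the
eigenvalues); junk value `A` for non-Hermitian `A`. -/
noncomputable def mpow (A : Matrix (Fin d) (Fin d) ℂ) (t : ℝ) : Matrix (Fin d) (Fin d) ℂ :=
  if hA : A.IsHermitian then
    (hA.eigenvectorUnitary : Matrix (Fin d) (Fin d) ℂ) *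
      Matrix.diagonal (fun i => ((hA.eigenvalues i ^ t : ℝ) : ℂ)) *
      star (hA.eigenvectorUnitary : Matrix (Fin d) (Fin d) ℂ)
  else A

/-- The μ-weighted geometric mean `A♯_μ B = A^{1/2} (A^{-1/2} B A^{-1/2})^μ A^{1/2}`. -/
noncomputable def sharp (A B : Matrix (Fin d) (Fin d) ℂ) (μ : ℝ) : Matrix (Fin d) (Fin d) ℂ :=
  mpow A (1 / 2) * mpow (mpow A (-(1 / 2)) * B * mpow A (-(1 / 2))) μ * mpow A (1 / 2)

open Matrix

/-!
Both sides of the inequality are real combinations of the matrices `A ♯_t B`, and these are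
simultaneously congruent to diagonal matrices: with `X = A^{-1/2} B A^{-1/2} = U diag(λ) U*` and
`V = A^{1/2} U`, one has `A ♯_t B = V diag(λ^t) V*`, so `A = V V*` and `B = V diag(λ) V*`. The
claim thus reduces to the scalar inequality for each eigenvalue `x = λᵢ > 0`, where the `k`-th
bracket is the square `(x^{(m_k+1)/2^{k+1}} - x^{m_k/2^{k+1}})²`.

The scalar inequality is proved by induction on `n₀`, generalizing `ν` and `x`. Writing
`x = y²`, the weighted AM-GM gap `1 - ν + ν x - x^ν` equals `ν (y - 1)² + gap_{2ν}(y)` and also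
`(1 - ν)(y - 1)² + y · gap_{2ν-1}(y)`; for `ν < 1/2`, resp. `ν ≥ 1/2`, the sum obeys the same
recursion, since `r` and `m` at `ν` shifted by one index are `r` and `m` at `2ν`, resp. `2ν - 1`.
-/

noncomputable def weightedAMGMGap (ν x : ℝ) : ℝ := 1 - ν + ν * x - x ^ ν

noncomputable def refinementSum (ν : ℝ) (n : ℕ) (x : ℝ) : ℝ :=
  ∑ k ∈ Finset.range n, r ν k * (x ^ ((m ν k + 1) / 2 ^ (k + 1)) - x ^ (m ν k / 2 ^ (k + 1))) ^ 2

lemma r_succ_of_le_half {ν : ℝ} (hν : ν ≤ 1 / 2) (k : ℕ) : r ν (k + 1) = r (2 * ν) k := by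
  induction k with
  | zero => simp only [r, min_eq_left (by linarith : ν ≤ 1 - ν)]
  | succ k ih => rw [r, ih, r]

lemma r_succ_of_half_le {ν : ℝ} (hν : 1 / 2 ≤ ν) (k : ℕ) : r ν (k + 1) = r (2 * ν - 1) k := by
  induction k with
  | zero => simp only [r, min_eq_right (by linarith : 1 - ν ≤ ν)]; rw [min_comm]; ring_nf
  | succ k ih => rw [r, ih, r]

lemma m_zero {ν : ℝ} (hν : ν ∈ Set.Ico (0 : ℝ) 1) : m ν 0 = 0 := by
  simp [m, Int.floor_eq_zero_iff.mpr hν]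

lemma m_succ (ν : ℝ) (k : ℕ) : m ν (k + 1) = m (2 * ν) k := by
  simp only [m, pow_succ, mul_assoc]

lemma m_succ_eq_m_two_mul_sub_one_add (ν : ℝ) (k : ℕ) :
    m ν (k + 1) = m (2 * ν - 1) k + 2 ^ k := by
  have : (2 : ℝ) ^ (k + 1) * ν = 2 ^ k * (2 * ν - 1) + ((2 ^ k : ℕ) : ℤ) := by push_cast; ring
  simp only [m, this, Int.floor_add_intCast]
  push_cast; ring

lemma sq_rpow_div_two_pow {y : ℝ} (hy : 0 ≤ y) (a : ℝ) (k : ℕ) :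
    (y ^ 2) ^ (a / 2 ^ (k + 1)) = y ^ (a / 2 ^ k) := by
  rw [← Real.rpow_natCast_mul hy, pow_succ]
  congr 1
  push_cast
  field_simp

lemma weightedAMGMGap_nonneg {ν x : ℝ} (hν : ν ∈ Set.Icc (0 : ℝ) 1) (hx : 0 ≤ x) :
    0 ≤ weightedAMGMGap ν x := by
  have := Real.geom_mean_le_arith_mean2_weighted (w₁ := 1 - ν) (p₁ := 1)
    (by linarith [hν.2]) hν.1 zero_le_one hx (by ring)
  rw [Real.one_rpow, one_mul, mul_one] at this
  unfold weightedAMGMGap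
  linarith

lemma weightedAMGMGap_sq_eq_two_mul (ν : ℝ) {y : ℝ} (hy : 0 ≤ y) :
    weightedAMGMGap ν (y ^ 2) = ν * (y - 1) ^ 2 + weightedAMGMGap (2 * ν) y := by
  have : (y ^ 2) ^ ν = y ^ (2 * ν) := by
    rw [← Real.rpow_natCast_mul hy]; norm_num
  simp only [weightedAMGMGap, this]
  ring

lemma weightedAMGMGap_sq_eq_two_mul_sub_one (ν : ℝ) {y : ℝ} (hy : 0 < y) :
    weightedAMGMGap ν (y ^ 2) =
      (1 - ν) * (y - 1) ^ 2 + y * weightedAMGMGap (2 * ν - 1) y := by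
  have : (y ^ 2) ^ ν = y * y ^ (2 * ν - 1) := by
    rw [← Real.rpow_natCast_mul hy.le, show ((2 : ℕ) : ℝ) * ν = 1 + (2 * ν - 1) by ring,
      Real.rpow_add hy, Real.rpow_one]
  simp only [weightedAMGMGap, this]
  ring

lemma refinementSum_succ_sq_of_lt_half {ν y : ℝ} (hν : ν ∈ Set.Ico (0 : ℝ) (1 / 2))
    (hy : 0 ≤ y) (n : ℕ) :
    refinementSum ν (n + 1) (y ^ 2) = ν * (y - 1) ^ 2 + refinementSum (2 * ν) n y := by
  have hr : r ν 0 = ν := min_eq_left (by linarith [hν.2])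
  simp only [refinementSum, Finset.sum_range_succ', sq_rpow_div_two_pow hy,
    r_succ_of_le_half hν.2.le, m_succ, hr, m_zero ⟨hν.1, by linarith [hν.2]⟩]
  simp only [zero_add, pow_zero, div_one, Real.rpow_one, Real.rpow_zero]
  ring

lemma refinementSum_succ_sq_of_half_le {ν y : ℝ} (hν : ν ∈ Set.Ico (1 / 2 : ℝ) 1)
    (hy : 0 < y) (n : ℕ) :
    refinementSum ν (n + 1) (y ^ 2) =
      (1 - ν) * (y - 1) ^ 2 + y * refinementSum (2 * ν - 1) n y := by
  have hr : r ν 0 = 1 - ν := min_eq_right (by linarith [hν.1])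
  have hshift (a : ℝ) (k : ℕ) :
      y ^ ((a + 2 ^ k) / 2 ^ (k + 1)) = y ^ (a / 2 ^ (k + 1)) * √y := by
    rw [Real.sqrt_eq_rpow, ← Real.rpow_add hy]
    congr 1; field_simp; ring
  simp only [refinementSum, Finset.sum_range_succ', sq_rpow_div_two_pow hy.le,
    r_succ_of_half_le hν.1, m_succ_eq_m_two_mul_sub_one_add, hr, m_zero ⟨by linarith [hν.1], hν.2⟩,
    add_right_comm _ ((2 : ℝ) ^ _) 1, hshift, Finset.mul_sum]
  simp only [zero_add, pow_zero, div_one, Real.rpow_one, Real.rpow_zero]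
  rw [add_comm]
  congr 1
  refine Finset.sum_congr rfl fun k _ => ?_
  linear_combination (r (2 * ν - 1) k * (y ^ ((m (2 * ν - 1) k + 1) / 2 ^ (k + 1)) -
    y ^ (m (2 * ν - 1) k / 2 ^ (k + 1))) ^ 2) * Real.sq_sqrt hy.le

lemma refinementSum_le_weightedAMGMGap (n : ℕ) {ν x : ℝ} (hν : ν ∈ Set.Ico (0 : ℝ) 1)
    (hx : 0 < x) : refinementSum ν n x ≤ weightedAMGMGap ν x := by
  induction n generalizing ν x with
  | zero => simpa [refinementSum] using weightedAMGMGap_nonneg (Set.Ico_subset_Icc_self hν) hx.le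
  | succ n ih =>
    obtain ⟨y, hy, rfl⟩ : ∃ y, 0 < y ∧ y ^ 2 = x := ⟨√x, by positivity, Real.sq_sqrt hx.le⟩
    rcases lt_or_ge ν (1 / 2) with hν2 | hν2
    · rw [refinementSum_succ_sq_of_lt_half ⟨hν.1, hν2⟩ hy.le,
        weightedAMGMGap_sq_eq_two_mul ν hy.le]
      gcongr
      exact ih ⟨by linarith [hν.1], by linarith⟩ hy
    · rw [refinementSum_succ_sq_of_half_le ⟨hν2, hν.2⟩ hy,
        weightedAMGMGap_sq_eq_two_mul_sub_one ν hy]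
      gcongr
      exact ih ⟨by linarith, by linarith [hν.2]⟩ hy

lemma rpow_dyadic_second_difference {x : ℝ} (hx : 0 < x) (a : ℝ) (k : ℕ) :
    x ^ (a / 2 ^ k) - 2 * x ^ ((2 * a + 1) / 2 ^ (k + 1)) + x ^ ((a + 1) / 2 ^ k) =
      (x ^ ((a + 1) / 2 ^ (k + 1)) - x ^ (a / 2 ^ (k + 1))) ^ 2 := by
  have hk : (2 : ℝ) ^ (k + 1) = 2 * 2 ^ k := pow_succ' 2 k
  rw [show a / 2 ^ k = a / 2 ^ (k + 1) + a / 2 ^ (k + 1) by rw [hk]; field_simp; ring,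
    show (2 * a + 1) / 2 ^ (k + 1) = (a + 1) / 2 ^ (k + 1) + a / 2 ^ (k + 1) by ring,
    show (a + 1) / 2 ^ k = (a + 1) / 2 ^ (k + 1) + (a + 1) / 2 ^ (k + 1) by
      rw [hk]; field_simp; ring]
  simp only [Real.rpow_add hx]
  ring

lemma mpow_of_isHermitian {A : Matrix (Fin d) (Fin d) ℂ} (hA : A.IsHermitian) (t : ℝ) :
    mpow A t = (hA.eigenvectorUnitary : Matrix (Fin d) (Fin d) ℂ) *
      diagonal (fun i => ((hA.eigenvalues i ^ t : ℝ) : ℂ)) *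
      star (hA.eigenvectorUnitary : Matrix (Fin d) (Fin d) ℂ) :=
  dif_pos hA

lemma isHermitian_mpow {A : Matrix (Fin d) (Fin d) ℂ} (hA : A.IsHermitian) (t : ℝ) :
    (mpow A t).IsHermitian := by
  rw [mpow_of_isHermitian hA, star_eq_conjTranspose]
  exact isHermitian_mul_mul_conjTranspose _ (isHermitian_diagonal_of_self_adjoint _
    (funext fun i => Complex.conj_ofReal _))

lemma mpow_zero {A : Matrix (Fin d) (Fin d) ℂ} (hA : A.IsHermitian) : mpow A 0 = 1 := by
  simp [mpow_of_isHermitian hA]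

lemma mpow_one {A : Matrix (Fin d) (Fin d) ℂ} (hA : A.IsHermitian) : mpow A 1 = A := by
  conv_rhs => rw [hA.spectral_theorem]
  simp only [mpow_of_isHermitian hA, Real.rpow_one]
  rfl

lemma mpow_add {A : Matrix (Fin d) (Fin d) ℂ} (hA : A.PosDef) (s t : ℝ) :
    mpow A (s + t) = mpow A s * mpow A t := by
  have hU := Matrix.mem_unitaryGroup_iff'.mp hA.1.eigenvectorUnitary.2
  simp only [mpow_of_isHermitian hA.1, Matrix.mul_assoc]
  rw [← Matrix.mul_assoc (star _) _ (diagonal _ * _), hU, Matrix.one_mul,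
    ← Matrix.mul_assoc (diagonal _), diagonal_mul_diagonal]
  simp only [Real.rpow_add (hA.eigenvalues_pos _), Complex.ofReal_mul]

lemma mpow_neg_half_mul_mpow_half {A : Matrix (Fin d) (Fin d) ℂ} (hA : A.PosDef) :
    mpow A (-(1 / 2)) * mpow A (1 / 2) = 1 := by
  rw [← mpow_add hA, neg_add_cancel, mpow_zero hA.1]

lemma mpow_half_mul_mpow_neg_half {A : Matrix (Fin d) (Fin d) ℂ} (hA : A.PosDef) :
    mpow A (1 / 2) * mpow A (-(1 / 2)) = 1 := by
  rw [← mpow_add hA, add_neg_cancel, mpow_zero hA.1]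

lemma mpow_half_mul_mpow_half {A : Matrix (Fin d) (Fin d) ℂ} (hA : A.PosDef) :
    mpow A (1 / 2) * mpow A (1 / 2) = A := by
  rw [← mpow_add hA, add_halves, mpow_one hA.1]

lemma posDef_mpow_neg_half_mul_mul {A B : Matrix (Fin d) (Fin d) ℂ} (hA : A.PosDef)
    (hB : B.PosDef) : (mpow A (-(1 / 2)) * B * mpow A (-(1 / 2))).PosDef := by
  have hC := isHermitian_mpow hA.1 (-(1 / 2))
  have hinj : Function.Injective (mpow A (-(1 / 2))).mulVec :=
    Function.LeftInverse.injective (g := (mpow A (1 / 2)).mulVec) fun x => by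
      rw [mulVec_mulVec, mpow_half_mul_mpow_neg_half hA, one_mulVec]
  simpa only [hC.eq] using hB.conjTranspose_mul_mul_same hinj

lemma isHermitian_mpow_neg_half_mul_mul {A B : Matrix (Fin d) (Fin d) ℂ} (hA : A.IsHermitian)
    (hB : B.IsHermitian) : (mpow A (-(1 / 2)) * B * mpow A (-(1 / 2))).IsHermitian := by
  have h := isHermitian_conjTranspose_mul_mul (mpow A (-(1 / 2))) hB
  rwa [(isHermitian_mpow hA _).eq] at h

lemma sharp_zero {A B : Matrix (Fin d) (Fin d) ℂ} (hA : A.PosDef) (hB : B.IsHermitian) :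
    sharp A B 0 = A := by
  rw [sharp, mpow_zero (isHermitian_mpow_neg_half_mul_mul hA.1 hB), Matrix.mul_one,
    mpow_half_mul_mpow_half hA]

lemma sharp_one {A B : Matrix (Fin d) (Fin d) ℂ} (hA : A.PosDef) (hB : B.IsHermitian) :
    sharp A B 1 = B := by
  rw [sharp, mpow_one (isHermitian_mpow_neg_half_mul_mul hA.1 hB)]
  simp only [← Matrix.mul_assoc, mpow_half_mul_mpow_neg_half hA, Matrix.one_mul]
  rw [Matrix.mul_assoc, mpow_neg_half_mul_mpow_half hA, Matrix.mul_one]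

noncomputable def conjDiagonal (V : Matrix (Fin d) (Fin d) ℂ) :
    (Fin d → ℝ) →ₗ[ℝ] Matrix (Fin d) (Fin d) ℂ where
  toFun f := V * diagonal (fun i => (f i : ℂ)) * Vᴴ
  map_add' f g := by simp [← diagonal_add, Matrix.mul_add, Matrix.add_mul]
  map_smul' c f := by
    rw [show (fun i => ((c • f) i : ℂ)) = (c : ℂ) • fun i => (f i : ℂ) from
      funext fun i => by simp, diagonal_smul, Matrix.mul_smul, Matrix.smul_mul, RingHom.id_apply,
      Complex.coe_smul]

lemma conjDiagonal_apply (V : Matrix (Fin d) (Fin d) ℂ) (f : Fin d → ℝ) :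
    conjDiagonal V f = V * diagonal (fun i => (f i : ℂ)) * Vᴴ := rfl

lemma posSemidef_conjDiagonal (V : Matrix (Fin d) (Fin d) ℂ) {f : Fin d → ℝ}
    (hf : ∀ i, 0 ≤ f i) : (conjDiagonal V f).PosSemidef :=
  (posSemidef_diagonal_iff.mpr fun i => Complex.zero_le_real.mpr (hf i)).mul_mul_conjTranspose_same
    V

lemma exists_sharp_eq_conjDiagonal {A B : Matrix (Fin d) (Fin d) ℂ} (hA : A.PosDef)
    (hB : B.PosDef) : ∃ (V : Matrix (Fin d) (Fin d) ℂ) (e : Fin d → ℝ), (∀ i, 0 < e i) ∧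
      ∀ t, sharp A B t = conjDiagonal V (fun i => e i ^ t) := by
  have hX := posDef_mpow_neg_half_mul_mul hA hB
  refine ⟨mpow A (1 / 2) * hX.1.eigenvectorUnitary, hX.1.eigenvalues, hX.eigenvalues_pos,
    fun t => ?_⟩
  rw [sharp, conjDiagonal_apply, mpow_of_isHermitian hX.1, conjTranspose_mul,
    (isHermitian_mpow hA.1 _).eq, star_eq_conjTranspose]
  simp only [Matrix.mul_assoc]

theorem stmt10 (A B : Matrix (Fin d) (Fin d) ℂ) (hA : A.PosDef) (hB : B.PosDef)
    (ν : ℝ) (hν : ν ∈ Set.Ioo (0 : ℝ) 1) (n₀ : ℕ) :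
    ((1 - ν) • A + ν • B -
      (sharp A B ν + ∑ k ∈ Finset.range (n₀ + 1), r ν k •
        (sharp A B (m ν k / 2 ^ k) - (2 : ℝ) • sharp A B ((2 * m ν k + 1) / 2 ^ (k + 1)) +
          sharp A B ((m ν k + 1) / 2 ^ k)))).PosSemidef := by
  obtain ⟨V, e, he, hsharp⟩ := exists_sharp_eq_conjDiagonal hA hB
  have hA_eq : A = conjDiagonal V 1 := by
    rw [← sharp_zero hA hB.1, hsharp]
    simp only [Real.rpow_zero]
    rfl
  have hB_eq : B = conjDiagonal V e := by
    rw [← sharp_one hA hB.1, hsharp]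
    simp only [Real.rpow_one]
  simp only [hsharp]
  rw [hA_eq, hB_eq]
  simp only [← map_smul, ← map_sub, ← map_add, ← map_sum]
  refine posSemidef_conjDiagonal V fun i => ?_
  have hgap := refinementSum_le_weightedAMGMGap (n₀ + 1) (Set.Ioo_subset_Ico_self hν) (he i)
  simp only [Pi.add_apply, Pi.sub_apply, Pi.smul_apply, Finset.sum_apply, Pi.one_apply,
    smul_eq_mul, rpow_dyadic_second_difference (he i)]
  unfold refinementSum weightedAMGMGap at hgap
  linarith
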